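/- Let $(G_n)_{n\geq 0}$ be a sequence of groups with associative unital homomorphisms $\oplus: G_m \times G_n \to G_{m+n}$ as above, satisfying condition $(\dagger')$: for every $n$ and every $a \in G_n$ there exists $c$ in the commutator subgroup $G_{2n}'$ of $G_{2n}$ with $a \oplus e_n = (e_n \oplus a) c$. Let $G_\infty = \operatorname{colim}_n G_n$ be the colimit along the maps $- \oplus e_1: G_n \to G_{n+1}$. Then the commutator subgroup of $G_\infty$ is perfect. -/

import Mathlib

/-!
Any `x, y ∈ G_∞` come from some `a, b ∈ G_N`. Stabilising `b` by `e_N` and applying `(†')`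
gives `y = v c` with `v = e_N ⊕ b` and `c ∈ G_∞'`; `v` commutes with `x = a ⊕ e_N`, the two acting
on disjoint blocks. Doing the same for `a ⊕ e_N ∈ G_{2N}` gives `x = w d` with `d ∈ G_∞'` and
`w = e_{2N} ⊕ (a ⊕ e_N)`, which commutes with `c` for the same reason once `c` is stabilised
to level `4N`.
Hence `[x, y]` is a conjugate of `[d, c] ∈ [G_∞', G_∞']`.
-/

/-- Iterated right stabilisation `G n → G k` (for `n ≤ k`) by the unit `e₁ ∈ G 1`. -/
def stabTo (G : ℕ → Type*) [∀ n, Group (G n)]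
    (op : ∀ m n, G m → G n → G (m + n)) {n k : ℕ} (h : n ≤ k) : G n → G k :=
  Nat.leRecOn h (fun {m} (a : G m) => op m 1 a 1)

open scoped commutatorElement

section Group

variable {Γ : Type*} [Group Γ]

theorem commutatorElement_mul_right_of_commute {x v : Γ} (h : Commute x v) (c : Γ) :
    ⁅x, v * c⁆ = v * ⁅x, c⁆ * v⁻¹ := by
  rw [commutatorElement_mul_right_eq_mul_conj, h.commutator_eq, one_mul]

theorem commutatorElement_mul_left_of_commute {w c : Γ} (h : Commute w c) (d : Γ) :
    ⁅w * d, c⁆ = w * ⁅d, c⁆ * w⁻¹ := by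
  rw [commutatorElement_mul_left_eq_conj_mul, h.commutator_eq, mul_one]

theorem commutatorElement_mem_commutator_of_commute {H : Subgroup Γ} [H.Normal]
    {x y v w c d : Γ} (hc : c ∈ H) (hd : d ∈ H) (hx : x = w * d) (hy : y = v * c)
    (hxv : Commute x v) (hwc : Commute w c) : ⁅x, y⁆ ∈ ⁅H, H⁆ := by
  have hdc : ⁅d, c⁆ ∈ ⁅H, H⁆ := Subgroup.commutator_mem_commutator hd hc
  rw [hy, commutatorElement_mul_right_of_commute hxv, hx,
    commutatorElement_mul_left_of_commute hwc]
  exact Subgroup.Normal.conj_mem inferInstance _ (Subgroup.Normal.conj_mem inferInstance _ hdc w) v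

theorem MonoidHom.map_mem_commutator {Γ' : Type*} [Group Γ'] (f : Γ →* Γ') {z : Γ}
    (hz : z ∈ commutator Γ) : f z ∈ commutator Γ' := by
  have : f z ∈ (commutator Γ).map f := ⟨z, hz, rfl⟩
  rw [map_commutator_eq] at this
  exact Subgroup.commutator_mono le_top le_top this

end Group

section Pairing

variable {G : ℕ → Type*} [∀ n, Group (G n)] {op : ∀ m n, G m → G n → G (m + n)}

theorem op_one_one
    (hop : ∀ m n (a a' : G m) (b b' : G n), op m n (a * a') (b * b') = op m n a b * op m n a' b')
    (m n : ℕ) : op m n (1 : G m) (1 : G n) = 1 := by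
  simpa using hop m n 1 1 1 1

theorem commute_op_one_op_one
    (hop : ∀ m n (a a' : G m) (b b' : G n), op m n (a * a') (b * b') = op m n a b * op m n a' b')
    {m n : ℕ} (a : G m) (b : G n) : Commute (op m n a 1) (op m n 1 b) := by
  have hab := hop m n a 1 1 b
  have hba := hop m n 1 a b 1
  simp only [mul_one, one_mul] at hab hba
  exact hab.symm.trans hba

variable {Ginf : Type*} [Group Ginf] {ι : ∀ n, G n →* Ginf}

theorem map_stabTo (hcompat : ∀ n (a : G n), ι (n + 1) (op n 1 a 1) = ι n a)
    {n k : ℕ} (h : n ≤ k) (a : G n) : ι k (stabTo G op h a) = ι n a := by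
  induction h with
  | refl => rw [stabTo, Nat.leRecOn_self]
  | @step k h ih =>
    rw [stabTo, Nat.leRecOn_succ h]
    exact (hcompat k _).trans ih

theorem map_op_one
    (hop : ∀ m n (a a' : G m) (b b' : G n), op m n (a * a') (b * b') = op m n a b * op m n a' b')
    (hassoc : ∀ m n k (a : G m) (b : G n) (c : G k),
      op (m + n) k (op m n a b) c
        = cast (congrArg G (Nat.add_assoc m n k).symm) (op m (n + k) a (op n k b c)))
    (hunit_right : ∀ m (a : G m), op m 0 a 1 = a)
    (hcompat : ∀ n (a : G n), ι (n + 1) (op n 1 a 1) = ι n a)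
    (k n : ℕ) (a : G n) : ι (n + k) (op n k a 1) = ι n a := by
  induction k with
  | zero => rw [hunit_right]; rfl
  | succ k ih =>
    have hstep : op (n + k) 1 (op n k a 1) 1 = op n (k + 1) a 1 := by
      rw [hassoc, op_one_one hop]
      exact cast_eq _ _
    change ι (n + k + 1) (op n (k + 1) a 1) = ι n a
    rw [← hstep, hcompat, ih]

theorem exists_map_eq_map_op_one_mul
    (hdagger : ∀ n (a : G n), ∃ c ∈ commutator (G (n + n)), op n n a 1 = op n n 1 a * c)
    (hstab : ∀ n (a : G n), ι (n + n) (op n n a 1) = ι n a) (n : ℕ) (a : G n) :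
    ∃ c ∈ commutator (G (n + n)), ι n a = ι (n + n) (op n n 1 a) * ι (n + n) c := by
  obtain ⟨c, hc, hac⟩ := hdagger n a
  exact ⟨c, hc, by rw [← hstab, hac, map_mul]⟩

theorem commutatorElement_map_mem_commutator_commutator
    (hop : ∀ m n (a a' : G m) (b b' : G n), op m n (a * a') (b * b') = op m n a b * op m n a' b')
    (hdagger : ∀ n (a : G n), ∃ c ∈ commutator (G (n + n)), op n n a 1 = op n n 1 a * c)
    (hstab : ∀ n (a : G n), ι (n + n) (op n n a 1) = ι n a) {N : ℕ} (a b : G N) :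
    ⁅ι N a, ι N b⁆ ∈ ⁅commutator Ginf, commutator Ginf⁆ := by
  obtain ⟨c, hc, hb⟩ := exists_map_eq_map_op_one_mul hdagger hstab N b
  obtain ⟨d, hd, ha₂⟩ := exists_map_eq_map_op_one_mul hdagger hstab (N + N) (op N N a 1)
  have ha : ι N a = ι (N + N) (op N N a 1) := (hstab N a).symm
  refine commutatorElement_mem_commutator_of_commute ((ι _).map_mem_commutator hc)
    ((ι _).map_mem_commutator hd) (ha.trans ha₂) hb ?_ ?_
  · rw [ha]
    exact (commute_op_one_op_one hop a b).map (ι _)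
  · rw [← hstab (N + N) c]
    exact ((commute_op_one_op_one hop c _).map (ι _)).symm

end Pairing

theorem commutator_of_colimit_perfect_general
    (G : ℕ → Type*) [∀ n, Group (G n)]
    (op : ∀ m n, G m → G n → G (m + n))
    (hop : ∀ m n (a a' : G m) (b b' : G n),
      op m n (a * a') (b * b') = op m n a b * op m n a' b')
    (hassoc : ∀ m n k (a : G m) (b : G n) (c : G k),
      op (m + n) k (op m n a b) c
        = cast (congrArg G (Nat.add_assoc m n k).symm) (op m (n + k) a (op n k b c)))
    (hunit_right : ∀ m (a : G m), op m 0 a 1 = a)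
    (hdagger : ∀ n (a : G n), ∃ c ∈ commutator (G (n + n)),
      op n n a 1 = op n n 1 a * c)
    (Ginf : Type*) [Group Ginf] (ι : ∀ n, G n →* Ginf)
    (hcompat : ∀ n (a : G n), ι (n + 1) (op n 1 a 1) = ι n a)
    (hsurj : ∀ g : Ginf, ∃ n a, ι n a = g) :
    ⁅commutator Ginf, commutator Ginf⁆ = commutator Ginf := by
  refine le_antisymm (Subgroup.commutator_le_self _) ?_
  have hstab : ∀ n (a : G n), ι (n + n) (op n n a 1) = ι n a :=
    fun n => map_op_one hop hassoc hunit_right hcompat n n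
  rw [commutator_def, Subgroup.commutator_le]
  rintro x - y -
  obtain ⟨n, a, rfl⟩ := hsurj x
  obtain ⟨m, b, rfl⟩ := hsurj y
  rw [← map_stabTo hcompat (le_max_left n m) a, ← map_stabTo hcompat (le_max_right n m) b]
  exact commutatorElement_map_mem_commutator_commutator hop hdagger hstab _ _

/-- Let `(G n)` be a sequence of groups with associative, unital homomorphic pairings
`⊕ : G m × G n → G (m+n)` satisfying condition `(†')`: for every `n` and `a ∈ G n`
there is `c ∈ G_{2n}'` with `a ⊕ e_n = (e_n ⊕ a) c`.  Let `Ginf` be the colimit of the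
system `-⊕e₁ : G n → G (n+1)` (with structure maps `ι n : G n → Ginf`, which are
compatible, jointly surjective, and identify exactly eventually-equal elements).
Then the commutator subgroup of `Ginf` is perfect. -/
theorem commutator_of_colimit_perfect
    (G : ℕ → Type*) [∀ n, Group (G n)]
    (op : ∀ m n, G m → G n → G (m + n))
    (hop : ∀ m n (a a' : G m) (b b' : G n),
      op m n (a * a') (b * b') = op m n a b * op m n a' b')
    (hassoc : ∀ m n k (a : G m) (b : G n) (c : G k),
      op (m + n) k (op m n a b) c
        = cast (congrArg G (Nat.add_assoc m n k).symm) (op m (n + k) a (op n k b c)))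
    (hunit_left : ∀ n (a : G n), op 0 n 1 a = cast (congrArg G (Nat.zero_add n).symm) a)
    (hunit_right : ∀ m (a : G m), op m 0 a 1 = a)
    (hdagger : ∀ n (a : G n), ∃ c ∈ commutator (G (n + n)),
      op n n a 1 = op n n 1 a * c)
    (Ginf : Type*) [Group Ginf] (ι : ∀ n, G n →* Ginf)
    (hcompat : ∀ n (a : G n), ι (n + 1) (op n 1 a 1) = ι n a)
    (hsurj : ∀ g : Ginf, ∃ n a, ι n a = g)
    (hinj : ∀ n (a b : G n), ι n a = ι n b →
      ∃ k, ∃ h : n ≤ k, stabTo G op h a = stabTo G op h b) :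
    ⁅commutator Ginf, commutator Ginf⁆ = commutator Ginf :=
  commutator_of_colimit_perfect_general G op hop hassoc hunit_right hdagger Ginf ι hcompat hsurj
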